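/- arXiv:1812.09927 — 3 statements merged into one kernel-verified Lean document; each statement's English description precedes it below -/
import Mathlib

section
/- Suppose P is φ-mixing (i.e. φ(n) → 0 as n → ∞) and sup_{a∈𝒜} P([a]) < 1. Then there exists a constant υ > 0 such that for every n ≥ 1 and every n-cylinder A = [a_0, a_1, …, a_{n−1}] one has P(A) ≤ e^{−υn}. -/
open MeasureTheory Filter Set

/-- Total variation distance `d_TV(μ,ν) = sup_G |μ(G) − ν(G)|`. -/
noncomputable def dTV {α : Type*} [MeasurableSpace α] (μ ν : Measure α) : ℝ :=
  sSup {x | ∃ s : Set α, MeasurableSet s ∧ x = |(μ s).toReal - (ν s).toReal|}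

/-- Geometric distribution on ℕ with `Geo(ρ){k} = ρ(1−ρ)^k`. -/
noncomputable def geoMeasure (ρ : ℝ) : Measure ℕ :=
  Measure.sum fun k => ENNReal.ofReal (ρ * (1 - ρ) ^ k) • Measure.dirac k

/-- First hitting time `τ_V(ω) = min{k ≥ 1 : T^k ω ∈ V}` (junk value 0 if no such k). -/
noncomputable def hitTime {Ω : Type*} (T : Ω → Ω) (V : Set Ω) (ω : Ω) : ℕ :=
  sInf {k | 1 ≤ k ∧ T^[k] ω ∈ V}

/-- `Σ_{U,V} = Σ_{k=0}^{τ_V−1} 1_U ∘ T^k`. -/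
noncomputable def numVisits {Ω : Type*} (T : Ω → Ω) (U V : Set Ω) (ω : Ω) : ℕ :=
  ∑ k ∈ Finset.range (hitTime T V ω), U.indicator (fun _ => 1) (T^[k] ω)

/-- The φ-dependence coefficient between two sub-σ-algebras. -/
noncomputable def phiCoef {Ω : Type*} [MeasurableSpace Ω] (P : Measure Ω)
    (G H : MeasurableSpace Ω) : ℝ :=
  sSup {x | ∃ Γ Δ : Set Ω, MeasurableSet[G] Γ ∧ MeasurableSet[H] Δ ∧ P Γ ≠ 0 ∧
    x = |(P (Γ ∩ Δ)).toReal / (P Γ).toReal - (P Δ).toReal|}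

/-- σ-algebra on the sequence space generated by the coordinates in `s`. -/
noncomputable def coordAlg (𝓐 : Type*) [m𝓐 : MeasurableSpace 𝓐] (s : Set ℕ) :
    MeasurableSpace (ℕ → 𝓐) :=
  ⨆ i ∈ s, m𝓐.comap fun ω => ω i

/-- `φ(n) = sup_{m≥0} φ(ℱ_{0,m}, ℱ_{m+n,∞})`. -/
noncomputable def phiMix (𝓐 : Type*) [MeasurableSpace 𝓐] (P : Measure (ℕ → 𝓐)) (n : ℕ) : ℝ :=
  ⨆ m : ℕ, phiCoef P (coordAlg 𝓐 (Set.Iic m)) (coordAlg 𝓐 (Set.Ici (m + n)))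

/-- `φ` extended to ℤ by `φ(k) = 1` for `k ≤ 0`. -/
noncomputable def phiMixZ (𝓐 : Type*) [MeasurableSpace 𝓐] (P : Measure (ℕ → 𝓐)) (j : ℤ) : ℝ :=
  if j ≤ 0 then 1 else phiMix 𝓐 P j.toNat

/-- The left shift on `𝓐^ℕ`. -/
def shift (𝓐 : Type*) : (ℕ → 𝓐) → (ℕ → 𝓐) := fun ω n => ω (n + 1)

/-- `π(U) = min{1 ≤ k ≤ n : U ∩ T^{−k}U ≠ ∅}`. -/
noncomputable def piRet {Ω : Type*} (T : Ω → Ω) (n : ℕ) (U : Set Ω) : ℕ :=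
  sInf {k | 1 ≤ k ∧ k ≤ n ∧ (U ∩ T^[k] ⁻¹' U).Nonempty}

/-- `π(U,V) = min{0 ≤ k ≤ min(n,m) : U ∩ T^{−k}V ≠ ∅ or V ∩ T^{−k}U ≠ ∅}`. -/
noncomputable def piJoint {Ω : Type*} (T : Ω → Ω) (n m : ℕ) (U V : Set Ω) : ℕ :=
  sInf {k | k ≤ min n m ∧ ((U ∩ T^[k] ⁻¹' V).Nonempty ∨ (V ∩ T^[k] ⁻¹' U).Nonempty)}

/-- `κ_{U,V} = min(π(U,V), π(U), π(V))`. -/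
noncomputable def kappa {Ω : Type*} (T : Ω → Ω) (n m : ℕ) (U V : Set Ω) : ℕ :=
  min (piJoint T n m U V) (min (piRet T n U) (piRet T m V))


/-- The cylinder `A^ξ_n = [ξ_0 … ξ_{n−1}]`. -/
def cyl {𝓐 : Type*} (ξ : ℕ → 𝓐) (n : ℕ) : Set (ℕ → 𝓐) := {ω | ∀ i < n, ω i = ξ i}

/-!
Let `θ = sup_a P([a]) < 1` and fix a gap `s ≥ 1` with `θ + φ(s) ≤ ρ := (1 + θ) / 2`. The cylinder
`[a_0 … a_{n-1}]` is contained in the event that `ω` agrees with `a` at the times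
`0, s, 2s, …, ⌊(n-1)/s⌋ s`. Peeling off the last of these times, the φ-mixing inequality
`P(Γ ∩ Δ) ≤ P(Γ) (P(Δ) + φ(s))` and stationarity (`P(ω_i = b) = P([b]) ≤ θ`) contribute a factor
`ρ < 1` per time, so `P([a_0 … a_{n-1}]) ≤ ρ^{n/s}`.
-/

section PhiCoef

-- `G` and `H` precede the ambient instance, so that instance search finds the latter.
variable {Ω : Type*} {G H : MeasurableSpace Ω} [MeasurableSpace Ω] (P : Measure Ω)
  [IsProbabilityMeasure P]

lemma abs_toReal_inter_div_sub_le_one (Γ Δ : Set Ω) :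
    |(P (Γ ∩ Δ)).toReal / (P Γ).toReal - (P Δ).toReal| ≤ 1 :=
  abs_sub_le_of_nonneg_of_le (by positivity)
    (div_le_one_of_le₀ (measureReal_mono inter_subset_left) measureReal_nonneg)
    measureReal_nonneg measureReal_le_one

lemma le_phiCoef {Γ Δ : Set Ω} (hΓ : MeasurableSet[G] Γ) (hΔ : MeasurableSet[H] Δ)
    (hΓ0 : P Γ ≠ 0) : |(P (Γ ∩ Δ)).toReal / (P Γ).toReal - (P Δ).toReal| ≤ phiCoef P G H :=
  le_csSup ⟨1, by rintro _ ⟨Γ, Δ, -, -, -, rfl⟩; exact abs_toReal_inter_div_sub_le_one P Γ Δ⟩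
    ⟨Γ, Δ, hΓ, hΔ, hΓ0, rfl⟩

lemma phiCoef_nonneg : 0 ≤ phiCoef P G H := by
  simpa using le_phiCoef P (G := G) (H := H) MeasurableSet.univ MeasurableSet.univ
    (NeZero.ne (P univ))

lemma phiCoef_le_one : phiCoef P G H ≤ 1 :=
  Real.sSup_le (by rintro _ ⟨Γ, Δ, -, -, -, rfl⟩; exact abs_toReal_inter_div_sub_le_one P Γ Δ)
    zero_le_one

lemma toReal_measure_inter_le_of_phiCoef {Γ Δ : Set Ω} (hΓ : MeasurableSet[G] Γ)
    (hΔ : MeasurableSet[H] Δ) :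
    (P (Γ ∩ Δ)).toReal ≤ (P Γ).toReal * ((P Δ).toReal + phiCoef P G H) := by
  rcases eq_or_ne (P Γ) 0 with hΓ0 | hΓ0
  · simp [measure_mono_null inter_subset_left hΓ0, hΓ0]
  · have hpos : 0 < (P Γ).toReal := ENNReal.toReal_pos hΓ0 (measure_ne_top P Γ)
    have h := (le_abs_self _).trans (le_phiCoef P hΓ hΔ hΓ0)
    rw [sub_le_iff_le_add, div_le_iff₀ hpos] at h
    linarith

end PhiCoef

section PhiMix

variable {𝓐 : Type*} [MeasurableSpace 𝓐] (P : Measure (ℕ → 𝓐)) [IsProbabilityMeasure P]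

lemma phiMix_nonneg (g : ℕ) : 0 ≤ phiMix 𝓐 P g :=
  Real.iSup_nonneg fun _ => phiCoef_nonneg P

lemma phiCoef_le_phiMix (m g : ℕ) :
    phiCoef P (coordAlg 𝓐 (Iic m)) (coordAlg 𝓐 (Ici (m + g))) ≤ phiMix 𝓐 P g :=
  le_ciSup (f := fun k => phiCoef P (coordAlg 𝓐 (Iic k)) (coordAlg 𝓐 (Ici (k + g))))
    ⟨1, by rintro _ ⟨k, rfl⟩; exact phiCoef_le_one P⟩ m

lemma toReal_measure_inter_le_of_phiMix {m g : ℕ} {Γ Δ : Set (ℕ → 𝓐)}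
    (hΓ : MeasurableSet[coordAlg 𝓐 (Iic m)] Γ) (hΔ : MeasurableSet[coordAlg 𝓐 (Ici (m + g))] Δ) :
    (P (Γ ∩ Δ)).toReal ≤ (P Γ).toReal * ((P Δ).toReal + phiMix 𝓐 P g) :=
  (toReal_measure_inter_le_of_phiCoef P hΓ hΔ).trans <| by
    gcongr
    exact phiCoef_le_phiMix P m g

end PhiMix

lemma measurableSet_coordAlg_coord_eq {𝓐 : Type*} [MeasurableSpace 𝓐] [MeasurableSingletonClass 𝓐]
    {s : Set ℕ} {i : ℕ} (hi : i ∈ s) (b : 𝓐) :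
    MeasurableSet[coordAlg 𝓐 s] {ω : ℕ → 𝓐 | ω i = b} := by
  have h : (‹MeasurableSpace 𝓐›.comap fun ω : ℕ → 𝓐 => ω i) ≤ coordAlg 𝓐 s :=
    le_iSup₂ (f := fun i (_ : i ∈ s) => ‹MeasurableSpace 𝓐›.comap fun ω : ℕ → 𝓐 => ω i) i hi
  exact h _ ⟨{b}, measurableSet_singleton b, rfl⟩

lemma measure_coord_eq_measure_coord_zero {𝓐 : Type*} [MeasurableSpace 𝓐]
    [MeasurableSingletonClass 𝓐] {P : Measure (ℕ → 𝓐)} (hinv : MeasurePreserving (shift 𝓐) P P)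
    (i : ℕ) (b : 𝓐) : P {ω | ω i = b} = P {ω | ω 0 = b} := by
  induction i with
  | zero => rfl
  | succ i ih =>
    have hmeas : MeasurableSet ((fun ω : ℕ → 𝓐 => ω i) ⁻¹' {b}) :=
      measurable_pi_apply i (measurableSet_singleton b)
    exact (hinv.measure_preimage hmeas.nullMeasurableSet).trans ih

def sparseCyl {𝓐 : Type*} (ξ : ℕ → 𝓐) (s N : ℕ) : Set (ℕ → 𝓐) :=
  {ω | ∀ j ≤ N, ω (j * s) = ξ (j * s)}

lemma cyl_subset_sparseCyl {𝓐 : Type*} (ξ : ℕ → 𝓐) {s n : ℕ} (hs : 0 < s) (hn : 1 ≤ n) :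
    cyl ξ n ⊆ sparseCyl ξ s ((n - 1) / s) := fun ω hω j hj =>
  hω _ <| by
    have := (Nat.le_div_iff_mul_le hs).mp hj
    omega

lemma sparseCyl_succ {𝓐 : Type*} (ξ : ℕ → 𝓐) (s N : ℕ) :
    sparseCyl ξ s (N + 1) = sparseCyl ξ s N ∩ {ω | ω ((N + 1) * s) = ξ ((N + 1) * s)} := by
  ext ω
  simp only [sparseCyl, mem_inter_iff, mem_ofPred_eq, Nat.le_succ_iff, or_imp, forall_and,
    forall_eq]

lemma measurableSet_sparseCyl {𝓐 : Type*} [MeasurableSpace 𝓐] [MeasurableSingletonClass 𝓐]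
    (ξ : ℕ → 𝓐) (s N : ℕ) : MeasurableSet[coordAlg 𝓐 (Iic (N * s))] (sparseCyl ξ s N) := by
  have h : sparseCyl ξ s N = ⋂ j ∈ Iic N, {ω : ℕ → 𝓐 | ω (j * s) = ξ (j * s)} := by
    ext ω; simp [sparseCyl]
  rw [h]
  exact .biInter (m := coordAlg 𝓐 (Iic (N * s))) (to_countable _) fun j hj =>
    measurableSet_coordAlg_coord_eq (i := j * s) (mem_Iic.2 (Nat.mul_le_mul_right s hj)) _

lemma toReal_measure_sparseCyl_le {𝓐 : Type*} [MeasurableSpace 𝓐] [MeasurableSingletonClass 𝓐]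
    {P : Measure (ℕ → 𝓐)} [IsProbabilityMeasure P] (ξ : ℕ → 𝓐) (s : ℕ) {ρ : ℝ}
    (hρ : ∀ i, (P {ω | ω i = ξ i}).toReal + phiMix 𝓐 P s ≤ ρ) (N : ℕ) :
    (P (sparseCyl ξ s N)).toReal ≤ ρ ^ (N + 1) := by
  have hρ0 : 0 ≤ ρ := (add_nonneg measureReal_nonneg (phiMix_nonneg P s)).trans (hρ 0)
  induction N with
  | zero =>
    have h0 : sparseCyl ξ s 0 = {ω | ω 0 = ξ 0} := by simp [sparseCyl]
    rw [h0, zero_add, pow_one]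
    linarith [hρ 0, phiMix_nonneg P s]
  | succ N ih =>
    have hΔ : MeasurableSet[coordAlg 𝓐 (Ici (N * s + s))]
        {ω | ω ((N + 1) * s) = ξ ((N + 1) * s)} :=
      measurableSet_coordAlg_coord_eq (by simp [add_mul]) _
    calc (P (sparseCyl ξ s (N + 1))).toReal
        ≤ (P (sparseCyl ξ s N)).toReal * ρ := by
          rw [sparseCyl_succ]
          exact (toReal_measure_inter_le_of_phiMix P (measurableSet_sparseCyl ξ s N) hΔ).trans
            (mul_le_mul_of_nonneg_left (hρ _) measureReal_nonneg)
      _ ≤ ρ ^ (N + 1) * ρ := by gcongr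
      _ = ρ ^ (N + 1 + 1) := (pow_succ ρ _).symm

lemma pow_le_exp_neg_mul {ρ : ℝ} (hρ0 : 0 < ρ) (hρ1 : ρ < 1) {s k n : ℕ} (hs : 0 < s)
    (hn : n ≤ k * s) : ρ ^ k ≤ Real.exp (-(-Real.log ρ / s) * n) := by
  have hlog : Real.log ρ ≤ 0 := (Real.log_neg hρ0 hρ1).le
  have hk : (n : ℝ) / s ≤ k := by
    rw [div_le_iff₀ (by exact_mod_cast hs)]
    exact_mod_cast hn
  calc ρ ^ k = Real.exp (k * Real.log ρ) := by rw [← Real.log_pow, Real.exp_log (pow_pos hρ0 k)]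
    _ ≤ Real.exp (n / s * Real.log ρ) :=
        Real.exp_le_exp.mpr (mul_le_mul_of_nonpos_right hk hlog)
    _ = Real.exp (-(-Real.log ρ / s) * n) := by ring_nf

theorem cylinder_measure_exponential_decay_general
    {𝓐 : Type*} [MeasurableSpace 𝓐] [DiscreteMeasurableSpace 𝓐]
    (P : Measure (ℕ → 𝓐)) [IsProbabilityMeasure P]
    (hinv : MeasurePreserving (shift 𝓐) P P)
    (hmix : Tendsto (fun n => phiMix 𝓐 P n) atTop (nhds 0))
    (hsup : (⨆ a : 𝓐, (P {ω | ω 0 = a}).toReal) < 1) :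

    ∃ υ : ℝ, 0 < υ ∧ ∀ n : ℕ, 1 ≤ n → ∀ a : ℕ → 𝓐,
      (P (cyl a n)).toReal ≤ Real.exp (-υ * n) := by
  set θ := ⨆ a : 𝓐, (P {ω | ω 0 = a}).toReal
  have hθ : ∀ i b, (P {ω | ω i = b}).toReal ≤ θ := fun i b => by
    rw [measure_coord_eq_measure_coord_zero hinv]
    exact le_ciSup (f := fun b : 𝓐 => (P {ω | ω 0 = b}).toReal)
      ⟨1, by rintro _ ⟨b, rfl⟩; exact measureReal_le_one⟩ b
  have hθ0 : 0 ≤ θ := Real.iSup_nonneg fun _ => measureReal_nonneg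
  set ρ := (1 + θ) / 2 with hρ
  obtain ⟨s, hs, hφ⟩ : ∃ s, 1 ≤ s ∧ phiMix 𝓐 P s < (1 - θ) / 2 :=
    ((eventually_ge_atTop 1).and (hmix.eventually (gt_mem_nhds (by linarith)))).exists
  have hρ0 : 0 < ρ := by positivity
  have hρ1 : ρ < 1 := by linarith
  refine ⟨-Real.log ρ / s, div_pos (neg_pos.mpr (Real.log_neg hρ0 hρ1)) (by positivity),
    fun n hn a => ?_⟩
  have hcover : n ≤ ((n - 1) / s + 1) * s := by
    have := Nat.lt_div_mul_add (a := n - 1) hs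
    rw [add_mul, one_mul]
    omega
  calc (P (cyl a n)).toReal ≤ (P (sparseCyl a s ((n - 1) / s))).toReal :=
        measureReal_mono (cyl_subset_sparseCyl a hs hn)
    _ ≤ ρ ^ ((n - 1) / s + 1) :=
        toReal_measure_sparseCyl_le a s (fun i => by linarith [hθ i (a i)]) _
    _ ≤ Real.exp (-(-Real.log ρ / s) * n) :=
        pow_le_exp_neg_mul hρ0 hρ1 hs hcover

/-- Lemma 3.1: if `P` is `φ`-mixing and `sup_a P([a]) < 1` then the measures of
`n`-cylinders decay exponentially fast in `n`. -/
theorem cylinder_measure_exponential_decay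
    {𝓐 : Type*} [MeasurableSpace 𝓐] [DiscreteMeasurableSpace 𝓐] [Countable 𝓐] [Nontrivial 𝓐]
    (P : Measure (ℕ → 𝓐)) [IsProbabilityMeasure P]
    (hinv : MeasurePreserving (shift 𝓐) P P)
    (hmix : Tendsto (fun n => phiMix 𝓐 P n) atTop (nhds 0))
    (hsup : (⨆ a : 𝓐, (P {ω | ω 0 = a}).toReal) < 1) :
    ∃ υ : ℝ, 0 < υ ∧ ∀ n : ℕ, 1 ≤ n → ∀ a : ℕ → 𝓐,
      (P (cyl a n)).toReal ≤ Real.exp (-υ * n) :=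
  cylinder_measure_exponential_decay_general P hinv hmix hsup
end

section
/- Let p, q ∈ (0,1) and set ϱ = p/(p + q(1−p)) and ρ = p/(p + q), so that ρ < ϱ. Then Σ_{k=0}^∞ |ϱ(1−ϱ)^k − ρ(1−ρ)^k| ≤ 2(ϱ − ρ)/(ρϱ) = 2q; consequently d_TV(Geo(ϱ), Geo(ρ)) ≤ 2q. -/
open MeasureTheory

/-!
A measure given by nonnegative point masses `f k` assigns `∑_{k ∈ G} f k` to a set `G`, so its
total variation distance to another such measure is at most the `ℓ¹`-distance of the masses.
For geometric masses with `ρ ≤ ϱ`, put `a = 1 - ϱ ≤ b = 1 - ρ` and split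
`ϱ aᵏ - ρ bᵏ = (ϱ - ρ) aᵏ - ρ (bᵏ - aᵏ)` into two nonnegative series, summing to `(ϱ - ρ)/ϱ` and
`ρ (1/ρ - 1/ϱ)`. Hence the `ℓ¹`-distance is at most `2(ϱ - ρ)/ϱ ≤ 2(ϱ - ρ)/(ρϱ) = 2(1/ρ - 1/ϱ)`,
and for `ρ = p/(p+q)`, `ϱ = p/(p+q(1-p))` one has `1/ρ - 1/ϱ = q`.
-/

lemma abs_tsum_indicator_sub_le {α : Type*} {f g : α → ℝ} (hf : Summable f) (hg : Summable g)
    (s : Set α) :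
    |∑' k, s.indicator f k - ∑' k, s.indicator g k| ≤ ∑' k, |f k - g k| := by
  have hfg : Summable fun k => |f k - g k| := (hf.sub hg).abs
  have hpt : ∀ k, ‖s.indicator (fun k => f k - g k) k‖ ≤ |f k - g k| :=
    fun k => norm_indicator_le_norm_self _ k
  rw [← (hf.indicator s).tsum_sub (hg.indicator s), ← Set.indicator_sub, ← Real.norm_eq_abs]
  calc ‖∑' k, s.indicator (fun k => f k - g k) k‖
      ≤ ∑' k, ‖s.indicator (fun k => f k - g k) k‖ :=
        norm_tsum_le_tsum_norm (hfg.of_nonneg_of_le (fun _ => norm_nonneg _) hpt)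
    _ ≤ ∑' k, |f k - g k| :=
        (hfg.of_nonneg_of_le (fun _ => norm_nonneg _) hpt).tsum_le_tsum hpt hfg

section DiscreteMeasure

variable {α : Type*} [MeasurableSpace α]

lemma sum_ofReal_smul_dirac_apply_toReal {f : α → ℝ} (hf0 : ∀ k, 0 ≤ f k) (hf : Summable f)
    {s : Set α} (hs : MeasurableSet s) :
    ((Measure.sum fun k => ENNReal.ofReal (f k) • Measure.dirac k) s).toReal =
      ∑' k, s.indicator f k := by
  have hind : ∀ k, 0 ≤ s.indicator f k := fun k => Set.indicator_nonneg (fun k _ => hf0 k) k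
  rw [Measure.sum_apply _ hs, ← ENNReal.toReal_ofReal (tsum_nonneg hind),
    ENNReal.ofReal_tsum_of_nonneg hind (hf.indicator s)]
  congr 2 with k
  by_cases hk : k ∈ s <;> simp [Measure.dirac_apply' _ hs, hk]

lemma dTV_sum_dirac_le_tsum_abs_sub {f g : α → ℝ} (hf0 : ∀ k, 0 ≤ f k) (hf : Summable f)
    (hg0 : ∀ k, 0 ≤ g k) (hg : Summable g) :
    dTV (Measure.sum fun k => ENNReal.ofReal (f k) • Measure.dirac k)
        (Measure.sum fun k => ENNReal.ofReal (g k) • Measure.dirac k) ≤ ∑' k, |f k - g k| := by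
  refine Real.sSup_le ?_ (tsum_nonneg fun _ => abs_nonneg _)
  rintro x ⟨s, hs, rfl⟩
  rw [sum_ofReal_smul_dirac_apply_toReal hf0 hf hs, sum_ofReal_smul_dirac_apply_toReal hg0 hg hs]
  exact abs_tsum_indicator_sub_le hf hg s

end DiscreteMeasure

section Geometric

variable {ρ ϱ : ℝ}

lemma summable_geometric_pmf (h0 : 0 < ρ) (h1 : ρ ≤ 1) : Summable fun k : ℕ => ρ * (1 - ρ) ^ k :=
  (summable_geometric_of_lt_one (by linarith) (by linarith)).mul_left ρ

lemma tsum_one_sub_pow (h0 : 0 < ρ) (h1 : ρ ≤ 1) : ∑' k : ℕ, (1 - ρ) ^ k = ρ⁻¹ := by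
  rw [tsum_geometric_of_lt_one (by linarith) (by linarith), sub_sub_cancel]

lemma dTV_geoMeasure_le (hρ0 : 0 < ρ) (hρ1 : ρ ≤ 1) (hϱ0 : 0 < ϱ) (hϱ1 : ϱ ≤ 1) :
    dTV (geoMeasure ϱ) (geoMeasure ρ) ≤ ∑' k : ℕ, |ϱ * (1 - ϱ) ^ k - ρ * (1 - ρ) ^ k| :=
  dTV_sum_dirac_le_tsum_abs_sub
    (fun k => by have := pow_nonneg (sub_nonneg.2 hϱ1) k; positivity) (summable_geometric_pmf hϱ0 hϱ1)
    (fun k => by have := pow_nonneg (sub_nonneg.2 hρ1) k; positivity) (summable_geometric_pmf hρ0 hρ1)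

lemma tsum_abs_geometric_pmf_sub_le (hρ0 : 0 < ρ) (hρϱ : ρ ≤ ϱ) (hϱ1 : ϱ ≤ 1) :
    ∑' k : ℕ, |ϱ * (1 - ϱ) ^ k - ρ * (1 - ρ) ^ k| ≤ 2 * (ϱ - ρ) / ϱ := by
  have hϱ0 : 0 < ϱ := hρ0.trans_le hρϱ
  have ha : Summable fun k : ℕ => (1 - ϱ) ^ k :=
    summable_geometric_of_lt_one (by linarith) (by linarith)
  have hb : Summable fun k : ℕ => (1 - ρ) ^ k :=
    summable_geometric_of_lt_one (by linarith) (by linarith)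
  have hpow : ∀ k : ℕ, (1 - ϱ) ^ k ≤ (1 - ρ) ^ k := fun k =>
    pow_le_pow_left₀ (by linarith) (by linarith) k
  have hpt : ∀ k : ℕ, |ϱ * (1 - ϱ) ^ k - ρ * (1 - ρ) ^ k|
      ≤ (ϱ - ρ) * (1 - ϱ) ^ k + ρ * ((1 - ρ) ^ k - (1 - ϱ) ^ k) := by
    intro k
    have h1 : 0 ≤ (ϱ - ρ) * (1 - ϱ) ^ k :=
      mul_nonneg (by linarith) (pow_nonneg (by linarith) k)
    have h2 : 0 ≤ ρ * ((1 - ρ) ^ k - (1 - ϱ) ^ k) :=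
      mul_nonneg hρ0.le (sub_nonneg.2 (hpow k))
    rw [abs_le]
    constructor <;> nlinarith
  have hmaj : Summable fun k : ℕ => (ϱ - ρ) * (1 - ϱ) ^ k + ρ * ((1 - ρ) ^ k - (1 - ϱ) ^ k) :=
    (ha.mul_left _).add ((hb.sub ha).mul_left _)
  calc ∑' k : ℕ, |ϱ * (1 - ϱ) ^ k - ρ * (1 - ρ) ^ k|
      ≤ ∑' k : ℕ, ((ϱ - ρ) * (1 - ϱ) ^ k + ρ * ((1 - ρ) ^ k - (1 - ϱ) ^ k)) :=
        (hmaj.of_nonneg_of_le (fun _ => abs_nonneg _) hpt).tsum_le_tsum hpt hmaj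
    _ = (ϱ - ρ) * ϱ⁻¹ + ρ * (ρ⁻¹ - ϱ⁻¹) := by
        rw [(ha.mul_left _).tsum_add ((hb.sub ha).mul_left _), tsum_mul_left, tsum_mul_left,
          hb.tsum_sub ha, tsum_one_sub_pow hϱ0 hϱ1, tsum_one_sub_pow hρ0 (hρϱ.trans hϱ1)]
    _ = 2 * (ϱ - ρ) / ϱ := by field_simp; ring

end Geometric

/-- Comparison of the geometric distributions with parameters `ϱ = p/(p+q(1−p))`
and `ρ = p/(p+q)`: the ℓ¹-distance of the point masses is at most
`2(ϱ−ρ)/(ρϱ) = 2q`, hence `d_TV(Geo(ϱ), Geo(ρ)) ≤ 2q`. -/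
theorem geometric_distributions_close
    (p q : ℝ) (hp : p ∈ Set.Ioo (0:ℝ) 1) (hq : q ∈ Set.Ioo (0:ℝ) 1) :
    p / (p + q) < p / (p + q * (1 - p)) ∧
    (∑' k : ℕ, |p / (p + q * (1 - p)) * (1 - p / (p + q * (1 - p))) ^ k
        - p / (p + q) * (1 - p / (p + q)) ^ k|)
      ≤ 2 * (p / (p + q * (1 - p)) - p / (p + q)) /
          ((p / (p + q)) * (p / (p + q * (1 - p)))) ∧
    2 * (p / (p + q * (1 - p)) - p / (p + q)) /
        ((p / (p + q)) * (p / (p + q * (1 - p)))) = 2 * q ∧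
    dTV (geoMeasure (p / (p + q * (1 - p)))) (geoMeasure (p / (p + q))) ≤ 2 * q := by
  obtain ⟨hp0, hp1⟩ := hp
  obtain ⟨hq0, hq1⟩ := hq
  have hden : 0 < p + q * (1 - p) := by nlinarith
  set ρ := p / (p + q) with hρ
  set ϱ := p / (p + q * (1 - p)) with hϱ
  have hρ0 : 0 < ρ := by positivity
  have hρ1 : ρ ≤ 1 := (div_le_one (by linarith)).2 (by linarith)
  have hρϱ : ρ < ϱ := div_lt_div_of_pos_left hp0 hden (by nlinarith)
  have hϱ1 : ϱ ≤ 1 := (div_le_one hden).2 (by nlinarith)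
  have hq_eq : 2 * (ϱ - ρ) / (ρ * ϱ) = 2 * q := by
    rw [hρ, hϱ]
    field_simp
    ring
  have hl1 : ∑' k : ℕ, |ϱ * (1 - ϱ) ^ k - ρ * (1 - ρ) ^ k| ≤ 2 * (ϱ - ρ) / (ρ * ϱ) :=
    (tsum_abs_geometric_pmf_sub_le hρ0 hρϱ.le hϱ1).trans
      (div_le_div_of_nonneg_left (by linarith) (by positivity) (by nlinarith))
  refine ⟨hρϱ, hl1, hq_eq, ?_⟩
  calc dTV (geoMeasure ϱ) (geoMeasure ρ)
      ≤ ∑' k : ℕ, |ϱ * (1 - ϱ) ^ k - ρ * (1 - ρ) ^ k| :=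
        dTV_geoMeasure_le hρ0 hρ1 (hρ0.trans hρϱ) hϱ1
    _ ≤ 2 * q := hq_eq ▸ hl1
end

section
/- Let ξ₀, ξ₁, ξ₂, … be independent identically distributed random variables with values in a measurable space, and let Γ_N, Δ_N be measurable sets with Γ_N ∩ Δ_N = ∅ such that lim_{N→∞} N·P(ξ₀ ∈ Γ_N)/λ = 1 and lim_{N→∞} N·P(ξ₀ ∈ Δ_N)/ν = 1 for some constants λ, ν > 0. Set τ_N = min{ n ≥ 0 : ξ_n ∈ Γ_N }. Then S_{τ_N} = Σ_{n=0}^{τ_N − 1} 1_{Δ_N}(ξ_n) converges in distribution as N → ∞ to a geometric random variable with parameter λ/(λ + ν). -/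
/-!
Let `p = P(ξ₀ ∈ A)`, `q = P(ξ₀ ∈ B)` and `r = 1 - p - q`. Since `p > 0`, the hitting time `τ` of `A`
is a.s. finite, and the event `{τ = m}` splits according to the set `s ⊆ {0, …, m - 1}` of times
spent in `B`; by independence each piece has probability `p q^|s| r^(m - |s|)`. Hence
`P(S_τ = k) = ∑ₘ C(m, k) p q^k r^(m - k) = p q^k / (p + q)^(k + 1)`: the count `S_τ` is exactly
geometric with parameter `p / (p + q)`. For `A = Γ_N`, `B = Δ_N` this parameter equals
`N p_N / (N p_N + N q_N) → λ / (λ + ν)`.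
-/

open MeasureTheory Filter ProbabilityTheory Finset Function

open scoped Classical

section Pathwise

variable {Ω α : Type*}

def visitPattern (A B : Set α) (m : ℕ) (s : Finset ℕ) (i : ℕ) : Set α :=
  if i = m then A else if i ∈ s then B else (A ∪ B)ᶜ

variable {A B : Set α}

theorem measurableSet_visitPattern [MeasurableSpace α] (hA : MeasurableSet A)
    (hB : MeasurableSet B) (m : ℕ) (s : Finset ℕ) (i : ℕ) :
    MeasurableSet (visitPattern A B m s i) := by
  unfold visitPattern
  split_ifs <;> measurability

theorem isLeast_and_filter_eq_iff_forall_mem_visitPattern (hAB : Disjoint A B)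
    {m : ℕ} {s : Finset ℕ} (hs : s ⊆ range m) (x : ℕ → α) :
    (IsLeast {n | x n ∈ A} m ∧ (range m).filter (x · ∈ B) = s) ↔
      ∀ i ∈ range (m + 1), x i ∈ visitPattern A B m s i := by
  simp only [Finset.mem_range, Nat.lt_succ_iff, visitPattern]
  constructor
  · rintro ⟨⟨hm, hleast⟩, rfl⟩ i hi
    rcases hi.eq_or_lt with rfl | hi
    · simpa using hm
    · have hiA : x i ∉ A := fun h => (hleast h).not_gt hi
      by_cases hiB : x i ∈ B <;> simp [hi.ne, hi, hiA, hiB]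
  · intro h
    have hpat : ∀ i < m, x i ∈ (if i ∈ s then B else (A ∪ B)ᶜ) := fun i hi => by
      simpa [hi.ne] using h i hi.le
    refine ⟨⟨by simpa using h m le_rfl, fun n hn => ?_⟩, ?_⟩
    · by_contra! hnm
      have := hpat n hnm
      split_ifs at this
      · exact hAB.notMem_of_mem_left hn this
      · exact this (Or.inl hn)
    · ext i
      simp only [Finset.mem_filter, Finset.mem_range]
      by_cases his : i ∈ s
      · have him := Finset.mem_range.1 (hs his)
        simpa [his, him] using hpat i him
      · refine iff_of_false (fun ⟨him, hiB⟩ => ?_) his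
        simpa [his, hiB] using hpat i him

theorem setOf_isLeast_and_filter_eq (hAB : Disjoint A B) {m : ℕ} {s : Finset ℕ}
    (hs : s ⊆ range m) (ξ : ℕ → Ω → α) :
    {ω | IsLeast {n | ξ n ω ∈ A} m ∧ (range m).filter (ξ · ω ∈ B) = s} =
      ⋂ i ∈ range (m + 1), ξ i ⁻¹' visitPattern A B m s i := by
  ext ω
  simpa using isLeast_and_filter_eq_iff_forall_mem_visitPattern hAB hs (ξ · ω)

theorem setOf_isLeast_and_card_filter_eq (ξ : ℕ → Ω → α) (m k : ℕ) :
    {ω | IsLeast {n | ξ n ω ∈ A} m ∧ #((range m).filter (ξ · ω ∈ B)) = k} =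
      ⋃ s ∈ powersetCard k (range m),
        {ω | IsLeast {n | ξ n ω ∈ A} m ∧ (range m).filter (ξ · ω ∈ B) = s} := by
  ext ω
  simp only [Set.mem_ofPred_eq, Set.mem_iUnion, mem_powersetCard, exists_prop]
  constructor
  · rintro ⟨hm, hk⟩
    exact ⟨_, ⟨filter_subset _ _, hk⟩, hm, rfl⟩
  · rintro ⟨s, ⟨-, hk⟩, hm, rfl⟩
    exact ⟨hm, hk⟩

theorem setOf_sum_indicator_eq_inter_exists_mem (ξ : ℕ → Ω → α) (k : ℕ) :
    {ω | ∑ n ∈ range (sInf {n | ξ n ω ∈ A}), B.indicator (fun _ => 1) (ξ n ω) = k} ∩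
        {ω | ∃ n, ξ n ω ∈ A} =
      ⋃ m, {ω | IsLeast {n | ξ n ω ∈ A} m ∧ #((range m).filter (ξ · ω ∈ B)) = k} := by
  ext ω
  simp only [Set.mem_inter_iff, Set.mem_ofPred_eq, Set.mem_iUnion, Set.indicator_apply,
    sum_boole]
  constructor
  · rintro ⟨hk, hhit⟩
    exact ⟨_, ⟨Nat.sInf_mem hhit, fun n hn => Nat.sInf_le hn⟩, hk⟩
  · rintro ⟨m, hm, hk⟩
    exact ⟨by rwa [hm.csInf_eq], m, hm.1⟩

end Pathwise

theorem hasSum_choose_mul_pow_sub {𝕜 : Type*} [NormedField 𝕜] [CompleteSpace 𝕜] (k : ℕ) {r : 𝕜}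
    (hr : ‖r‖ < 1) :
    HasSum (fun m : ℕ => (m.choose k : 𝕜) * r ^ (m - k)) (1 / (1 - r) ^ (k + 1)) := by
  refine ((add_left_injective k).hasSum_iff fun m hm => ?_).1 ?_
  · have hmk : m < k := by
      by_contra! h
      exact hm ⟨m - k, Nat.sub_add_cancel h⟩
    simp [Nat.choose_eq_zero_of_lt hmk]
  · simpa [comp_def] using hasSum_choose_mul_geometric_of_norm_lt_one k hr

theorem MeasureTheory.measureReal_iUnion_eq_tsum {Ω ι : Type*} [MeasurableSpace Ω] [Countable ι]
    {μ : Measure Ω} [IsFiniteMeasure μ] {f : ι → Set Ω} (hd : Pairwise (Disjoint on f))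
    (hf : ∀ i, MeasurableSet (f i)) : μ.real (⋃ i, f i) = ∑' i, μ.real (f i) := by
  rw [measureReal_def, measure_iUnion hd hf, ENNReal.tsum_toReal_eq fun i => measure_ne_top μ _]
  rfl

section IID

variable {Ω α : Type*} [MeasurableSpace Ω] [MeasurableSpace α] {P : Measure Ω} {ξ : ℕ → Ω → α}
  {A B : Set α}

theorem measureReal_biInter_preimage_eq_prod_of_iid (hmeas : ∀ n, Measurable (ξ n))
    (hindep : iIndepFun ξ P) (hident : ∀ n, P.map (ξ n) = P.map (ξ 0)) (I : Finset ℕ)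
    {T : ℕ → Set α} (hT : ∀ i, MeasurableSet (T i)) :
    P.real (⋂ i ∈ I, ξ i ⁻¹' T i) = ∏ i ∈ I, P.real (ξ 0 ⁻¹' T i) := by
  rw [measureReal_def, hindep.measure_inter_preimage_eq_mul I fun i _ => hT i,
    ENNReal.toReal_prod]
  refine prod_congr rfl fun i _ => ?_
  rw [← Measure.map_apply (hmeas i) (hT i), hident i, Measure.map_apply (hmeas 0) (hT i)]
  rfl

theorem ae_exists_mem_of_iid [IsProbabilityMeasure P] (hmeas : ∀ n, Measurable (ξ n))
    (hindep : iIndepFun ξ P) (hident : ∀ n, P.map (ξ n) = P.map (ξ 0)) (hA : MeasurableSet A)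
    (hp : 0 < P.real (ξ 0 ⁻¹' A)) : ∀ᵐ ω ∂P, ∃ n, ξ n ω ∈ A := by
  rw [ae_iff, ← measureReal_eq_zero_iff]
  have hbound : ∀ M, P.real {ω | ¬∃ n, ξ n ω ∈ A} ≤ (1 - P.real (ξ 0 ⁻¹' A)) ^ M := fun M =>
    calc P.real {ω | ¬∃ n, ξ n ω ∈ A} ≤ P.real (⋂ i ∈ range M, ξ i ⁻¹' Aᶜ) :=
          measureReal_mono fun ω hω => by simp_all
      _ = (1 - P.real (ξ 0 ⁻¹' A)) ^ M := by
        rw [measureReal_biInter_preimage_eq_prod_of_iid hmeas hindep hident _ fun _ => hA.compl,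
          prod_const, card_range, Set.preimage_compl, probReal_compl_eq_one_sub (hmeas 0 hA)]
  have hlim : Tendsto (fun M => (1 - P.real (ξ 0 ⁻¹' A)) ^ M) atTop (nhds 0) :=
    tendsto_pow_atTop_nhds_zero_of_lt_one (sub_nonneg.2 measureReal_le_one) (by linarith)
  exact le_antisymm (ge_of_tendsto' hlim hbound) measureReal_nonneg

theorem measurableSet_isLeast_and_filter_eq (hmeas : ∀ n, Measurable (ξ n))
    (hA : MeasurableSet A) (hB : MeasurableSet B) (hAB : Disjoint A B) {m : ℕ} {s : Finset ℕ}
    (hs : s ⊆ range m) :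
    MeasurableSet {ω | IsLeast {n | ξ n ω ∈ A} m ∧ (range m).filter (ξ · ω ∈ B) = s} := by
  rw [setOf_isLeast_and_filter_eq hAB hs]
  exact Finset.measurableSet_biInter _ fun i _ => hmeas i (measurableSet_visitPattern hA hB m s i)

theorem measureReal_isLeast_and_filter_eq (hmeas : ∀ n, Measurable (ξ n))
    (hindep : iIndepFun ξ P) (hident : ∀ n, P.map (ξ n) = P.map (ξ 0)) (hA : MeasurableSet A)
    (hB : MeasurableSet B) (hAB : Disjoint A B) {m : ℕ} {s : Finset ℕ} (hs : s ⊆ range m) :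
    P.real {ω | IsLeast {n | ξ n ω ∈ A} m ∧ (range m).filter (ξ · ω ∈ B) = s} =
      P.real (ξ 0 ⁻¹' A) * P.real (ξ 0 ⁻¹' B) ^ #s * P.real (ξ 0 ⁻¹' (A ∪ B)ᶜ) ^ (m - #s) := by
  have hbefore : ∀ i ∈ range m, P.real (ξ 0 ⁻¹' visitPattern A B m s i) =
      if i ∈ s then P.real (ξ 0 ⁻¹' B) else P.real (ξ 0 ⁻¹' (A ∪ B)ᶜ) := fun i hi => by
    rw [visitPattern, if_neg (mem_range.1 hi).ne]
    split_ifs <;> rfl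
  rw [setOf_isLeast_and_filter_eq hAB hs, measureReal_biInter_preimage_eq_prod_of_iid hmeas
    hindep hident _ (measurableSet_visitPattern hA hB m s), prod_range_succ,
    prod_congr rfl hbefore, prod_ite, filter_mem_eq_inter, inter_eq_right.2 hs,
    ← sdiff_eq_filter, prod_const, prod_const, card_sdiff_of_subset hs, card_range,
    visitPattern, if_pos rfl]
  ring

theorem measurableSet_isLeast_and_card_filter_eq (hmeas : ∀ n, Measurable (ξ n))
    (hA : MeasurableSet A) (hB : MeasurableSet B) (hAB : Disjoint A B) (m k : ℕ) :
    MeasurableSet {ω | IsLeast {n | ξ n ω ∈ A} m ∧ #((range m).filter (ξ · ω ∈ B)) = k} := by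
  rw [setOf_isLeast_and_card_filter_eq]
  exact Finset.measurableSet_biUnion _ fun s hs =>
    measurableSet_isLeast_and_filter_eq hmeas hA hB hAB (mem_powersetCard.1 hs).1

theorem measureReal_isLeast_and_card_filter_eq [IsFiniteMeasure P] (hmeas : ∀ n, Measurable (ξ n))
    (hindep : iIndepFun ξ P) (hident : ∀ n, P.map (ξ n) = P.map (ξ 0)) (hA : MeasurableSet A)
    (hB : MeasurableSet B) (hAB : Disjoint A B) (m k : ℕ) :
    P.real {ω | IsLeast {n | ξ n ω ∈ A} m ∧ #((range m).filter (ξ · ω ∈ B)) = k} =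
      m.choose k * (P.real (ξ 0 ⁻¹' A) * P.real (ξ 0 ⁻¹' B) ^ k *
        P.real (ξ 0 ⁻¹' (A ∪ B)ᶜ) ^ (m - k)) := by
  rw [setOf_isLeast_and_card_filter_eq, measureReal_biUnion_finset]
  · rw [sum_congr rfl fun s hs => by
      rw [measureReal_isLeast_and_filter_eq hmeas hindep hident hA hB hAB
        (mem_powersetCard.1 hs).1, (mem_powersetCard.1 hs).2],
      sum_const, card_powersetCard, card_range, nsmul_eq_mul]
  · exact fun s _ s' _ hss' => Set.disjoint_left.2 fun ω h h' => hss' (h.2.symm.trans h'.2)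
  · exact fun s hs => measurableSet_isLeast_and_filter_eq hmeas hA hB hAB (mem_powersetCard.1 hs).1

theorem measureReal_sum_indicator_before_hit_eq [IsProbabilityMeasure P]
    (hmeas : ∀ n, Measurable (ξ n)) (hindep : iIndepFun ξ P)
    (hident : ∀ n, P.map (ξ n) = P.map (ξ 0)) (hA : MeasurableSet A) (hB : MeasurableSet B)
    (hAB : Disjoint A B) (hp : 0 < P.real (ξ 0 ⁻¹' A)) (k : ℕ) :
    P.real {ω | ∑ n ∈ range (sInf {n | ξ n ω ∈ A}), B.indicator (fun _ => 1) (ξ n ω) = k} =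
      P.real (ξ 0 ⁻¹' A) / (P.real (ξ 0 ⁻¹' A) + P.real (ξ 0 ⁻¹' B)) *
        (1 - P.real (ξ 0 ⁻¹' A) / (P.real (ξ 0 ⁻¹' A) + P.real (ξ 0 ⁻¹' B))) ^ k := by
  set p := P.real (ξ 0 ⁻¹' A)
  set q := P.real (ξ 0 ⁻¹' B)
  have hr : P.real (ξ 0 ⁻¹' (A ∪ B)ᶜ) = 1 - (p + q) := by
    rw [Set.preimage_compl, probReal_compl_eq_one_sub (hmeas 0 (hA.union hB)),
      Set.preimage_union, measureReal_union (hAB.preimage _) (hmeas 0 hB)]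
  set D : ℕ → Set Ω := fun m =>
    {ω | IsLeast {n | ξ n ω ∈ A} m ∧ #((range m).filter (ξ · ω ∈ B)) = k}
  have hdisj : Pairwise (Disjoint on D) := fun m m' hne =>
    Set.disjoint_left.2 fun ω h h' => hne (h.1.unique h'.1)
  have hsum : HasSum (fun m => P.real (D m)) (p * q ^ k / (p + q) ^ (k + 1)) := by
    have hq : 0 ≤ q := measureReal_nonneg
    have hr₀ : 0 ≤ 1 - (p + q) := hr ▸ measureReal_nonneg
    have hnorm : ‖1 - (p + q)‖ < 1 := by rw [Real.norm_of_nonneg hr₀]; linarith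
    simp only [D, measureReal_isLeast_and_card_filter_eq hmeas hindep hident hA hB hAB, hr]
    have h := (hasSum_choose_mul_pow_sub k hnorm).mul_left (p * q ^ k)
    rw [sub_sub_cancel, mul_one_div] at h
    exact h.congr_fun fun m => by ring
  have hpq : p + q ≠ 0 := by positivity
  calc P.real {ω | ∑ n ∈ range (sInf {n | ξ n ω ∈ A}), B.indicator (fun _ => 1) (ξ n ω) = k}
      = P.real ({ω | ∑ n ∈ range (sInf {n | ξ n ω ∈ A}), B.indicator (fun _ => 1) (ξ n ω) = k}
          ∩ {ω | ∃ n, ξ n ω ∈ A}) := by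
        have hnull : P {ω | ∃ n, ξ n ω ∈ A}ᶜ = 0 := ae_exists_mem_of_iid hmeas hindep hident hA hp
        rw [measureReal_def, measureReal_def, measure_inter_conull hnull]
    _ = p * q ^ k / (p + q) ^ (k + 1) := by
        rw [setOf_sum_indicator_eq_inter_exists_mem, measureReal_iUnion_eq_tsum hdisj fun m =>
          measurableSet_isLeast_and_card_filter_eq hmeas hA hB hAB m k, hsum.tsum_eq]
    _ = p / (p + q) * (1 - p / (p + q)) ^ k := by
        rw [one_sub_div hpq, add_sub_cancel_left, div_pow, div_mul_div_comm, pow_succ']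

end IID

theorem tendsto_div_add_of_tendsto_natCast_mul {p q : ℕ → ℝ} {a b : ℝ}
    (hp : Tendsto (fun N : ℕ => N * p N) atTop (nhds a))
    (hq : Tendsto (fun N : ℕ => N * q N) atTop (nhds b)) (hab : a + b ≠ 0) :
    Tendsto (fun N => p N / (p N + q N)) atTop (nhds (a / (a + b))) :=
  (hp.div (hp.add hq) hab).congr' <| (eventually_ne_atTop 0).mono fun N hN => by
    rw [Pi.div_apply, ← mul_add, mul_div_mul_left _ _ (Nat.cast_ne_zero.2 hN)]

/-- The classical i.i.d. case: for i.i.d. `ξ_n` and disjoint sets `Γ_N`, `Δ_N` with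
`N·P(ξ₀ ∈ Γ_N) → λ` and `N·P(ξ₀ ∈ Δ_N) → ν`, the number of visits to `Δ_N` before the
first visit to `Γ_N` converges in distribution to the geometric law with parameter
`λ/(λ+ν)` (convergence in distribution of ℕ-valued variables stated via point masses). -/
theorem iid_geometric_limit
    {Ω α : Type*} [MeasurableSpace Ω] [MeasurableSpace α]
    (P : Measure Ω) [IsProbabilityMeasure P]
    (ξ : ℕ → Ω → α) (hmeas : ∀ n, Measurable (ξ n))
    (hindep : iIndepFun ξ P)
    (hident : ∀ n, P.map (ξ n) = P.map (ξ 0))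
    (Γ Δ : ℕ → Set α)
    (hΓmeas : ∀ N, MeasurableSet (Γ N)) (hΔmeas : ∀ N, MeasurableSet (Δ N))
    (hdisj : ∀ N, Γ N ∩ Δ N = ∅)
    (lam ν : ℝ) (hlam : 0 < lam) (hν : 0 < ν)
    (hΓlim : Tendsto (fun N : ℕ => (N : ℝ) * (P {ω | ξ 0 ω ∈ Γ N}).toReal / lam)
      atTop (nhds 1))
    (hΔlim : Tendsto (fun N : ℕ => (N : ℝ) * (P {ω | ξ 0 ω ∈ Δ N}).toReal / ν)
      atTop (nhds 1)) :
    ∀ k : ℕ,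
      Tendsto (fun N : ℕ =>
          (P {ω | (∑ n ∈ Finset.range (sInf {n | ξ n ω ∈ Γ N}),
            (Δ N).indicator (fun _ => 1) (ξ n ω)) = k}).toReal)
        atTop (nhds ((lam / (lam + ν)) * (1 - lam / (lam + ν)) ^ k)) := by
  intro k
  have hΓ : Tendsto (fun N : ℕ => N * (P {ω | ξ 0 ω ∈ Γ N}).toReal) atTop (nhds lam) := by
    simpa only [div_mul_cancel₀ _ hlam.ne', one_mul] using hΓlim.mul_const lam
  have hΔ : Tendsto (fun N : ℕ => N * (P {ω | ξ 0 ω ∈ Δ N}).toReal) atTop (nhds ν) := by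
    simpa only [div_mul_cancel₀ _ hν.ne', one_mul] using hΔlim.mul_const ν
  have hpos : ∀ᶠ N in atTop, 0 < (P {ω | ξ 0 ω ∈ Γ N}).toReal :=
    (hΓ.eventually_const_lt hlam).mono fun N hN => pos_of_mul_pos_right hN N.cast_nonneg
  have hρ := tendsto_div_add_of_tendsto_natCast_mul hΓ hΔ (by positivity)
  have hgeom : Continuous fun ρ : ℝ => ρ * (1 - ρ) ^ k := by fun_prop
  refine ((hgeom.tendsto _).comp hρ).congr' (hpos.mono fun N hN => ?_)
  exact (measureReal_sum_indicator_before_hit_eq hmeas hindep hident (hΓmeas N) (hΔmeas N)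
    (Set.disjoint_iff_inter_eq_empty.2 (hdisj N)) hN k).symm
end
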